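/- Let f(x) be the Hankel quartic form in four variables generated by v ∈ ℝ^{13} with v_4 = 0. If f(x) ≥ 0 for all x ∈ ℝ^4, then v_j = 0 for all j = 1, ..., 11, and hence f(x) = v_0 x_1^4 + v_{12} x_4^4 with v_0 ≥ 0 and v_{12} ≥ 0. -/
import Mathlib

open Filter Topology Finset

private lemma lead_nonneg (n : ℕ) (c : ℕ → ℝ)
    (h : ∀ t : ℝ, 0 ≤ ∑ i ∈ Finset.range (n+1), c i * t ^ i) : 0 ≤ c n := by
  have h1 : ∀ᶠ t : ℝ in atTop, (∑ i ∈ Finset.range (n+1), c i * t ^ i) / t ^ n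
      = c n + ∑ i ∈ Finset.range n, c i * (t ^ (n - i))⁻¹ := by
    filter_upwards [eventually_gt_atTop 0] with t ht
    rw [Finset.sum_range_succ, add_div, Finset.sum_div]
    have hcn : c n * t ^ n / t ^ n = c n := by
      field_simp
    rw [hcn, add_comm]
    congr 1
    apply Finset.sum_congr rfl
    intro i hi
    have hi' : i < n := Finset.mem_range.mp hi
    have ht' : t ^ i ≠ 0 := pow_ne_zero _ ht.ne'
    have hsplit : t ^ n = t ^ i * t ^ (n - i) := by
      rw [← pow_add]; congr 1; omega
    rw [hsplit, mul_div_assoc]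
    congr 1
    rw [div_mul_eq_div_div, div_self ht', one_div]
  have h2 : Filter.Tendsto (fun t : ℝ => c n + ∑ i ∈ Finset.range n, c i * (t ^ (n - i))⁻¹)
      atTop (𝓝 (c n + ∑ i ∈ Finset.range n, (0:ℝ))) := by
    apply Filter.Tendsto.const_add
    apply tendsto_finset_sum
    intro i hi
    have hi' : i < n := Finset.mem_range.mp hi
    have : Filter.Tendsto (fun t : ℝ => t ^ (n - i)) atTop atTop :=
      tendsto_pow_atTop (by omega)
    simpa using (this.inv_tendsto_atTop.const_mul (c i))
  have h3 : Filter.Tendsto (fun t : ℝ => (∑ i ∈ Finset.range (n+1), c i * t ^ i) / t ^ n)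
      atTop (𝓝 (c n)) := by
    have := h2.congr' (EventuallyEq.symm h1)
    simpa using this
  apply ge_of_tendsto h3
  filter_upwards [eventually_gt_atTop 0] with t ht
  exact div_nonneg (h t) (by positivity)

private lemma lead_zero_odd (n : ℕ) (hn : Odd n) (c : ℕ → ℝ)
    (h : ∀ t : ℝ, 0 ≤ ∑ i ∈ Finset.range (n+1), c i * t ^ i) : c n = 0 := by
  have h1 := lead_nonneg n c h
  have h2 := lead_nonneg n (fun i => (-1)^i * c i) (fun t => by
    have := h (-t)
    calc (0:ℝ) ≤ ∑ i ∈ Finset.range (n+1), c i * (-t) ^ i := this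
    _ = ∑ i ∈ Finset.range (n+1), (-1)^i * c i * t ^ i := by
        apply Finset.sum_congr rfl; intro i _; rw [neg_pow]; ring)
  have : (-1:ℝ)^n = -1 := hn.neg_one_pow
  simp only [this] at h2
  linarith

private lemma nn2 (c0 c1 c2 : ℝ) (h : ∀ t : ℝ, 0 ≤ c0 + c1*t + c2*t^2) : 0 ≤ c2 := by
  have := lead_nonneg 2 (fun i => [c0, c1, c2].getD i 0) (fun t => by
    have := h t
    simp [Finset.sum_range_succ]
    linarith)
  simpa using this

private lemma nn4 (c0 c1 c2 c3 c4 : ℝ)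
    (h : ∀ t : ℝ, 0 ≤ c0 + c1*t + c2*t^2 + c3*t^3 + c4*t^4) : 0 ≤ c4 := by
  have := lead_nonneg 4 (fun i => [c0, c1, c2, c3, c4].getD i 0) (fun t => by
    have := h t
    simp [Finset.sum_range_succ]
    linarith)
  simpa using this

private lemma nn6 (c0 c1 c2 c3 c4 c5 c6 : ℝ)
    (h : ∀ t : ℝ, 0 ≤ c0 + c1*t + c2*t^2 + c3*t^3 + c4*t^4 + c5*t^5 + c6*t^6) :
    0 ≤ c6 := by
  have := lead_nonneg 6 (fun i => [c0, c1, c2, c3, c4, c5, c6].getD i 0) (fun t => by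
    have := h t
    simp [Finset.sum_range_succ]
    linarith)
  simpa using this

private lemma z1 (c0 c1 : ℝ) (h : ∀ t : ℝ, 0 ≤ c0 + c1*t) : c1 = 0 := by
  have := lead_zero_odd 1 ⟨0, rfl⟩ (fun i => [c0, c1].getD i 0) (fun t => by
    have := h t
    simp [Finset.sum_range_succ]
    linarith)
  simpa using this

private lemma z3 (c0 c1 c2 c3 : ℝ) (h : ∀ t : ℝ, 0 ≤ c0 + c1*t + c2*t^2 + c3*t^3) :
    c3 = 0 := by
  have := lead_zero_odd 3 ⟨1, rfl⟩ (fun i => [c0, c1, c2, c3].getD i 0) (fun t => by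
    have := h t
    simp [Finset.sum_range_succ]
    linarith)
  simpa using this

private lemma z5 (c0 c1 c2 c3 c4 c5 : ℝ)
    (h : ∀ t : ℝ, 0 ≤ c0 + c1*t + c2*t^2 + c3*t^3 + c4*t^4 + c5*t^5) : c5 = 0 := by
  have := lead_zero_odd 5 ⟨2, rfl⟩ (fun i => [c0, c1, c2, c3, c4, c5].getD i 0) (fun t => by
    have := h t
    simp [Finset.sum_range_succ]
    linarith)
  simpa using this

private lemma z7 (c0 c1 c2 c3 c4 c5 c6 c7 : ℝ)
    (h : ∀ t : ℝ, 0 ≤ c0 + c1*t + c2*t^2 + c3*t^3 + c4*t^4 + c5*t^5 + c6*t^6 + c7*t^7) :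
    c7 = 0 := by
  have := lead_zero_odd 7 ⟨3, rfl⟩ (fun i => [c0, c1, c2, c3, c4, c5, c6, c7].getD i 0)
    (fun t => by
    have := h t
    simp [Finset.sum_range_succ]
    linarith)
  simpa using this

private lemma fin4_val3 : ((3 : Fin 4) : ℕ) = 3 := rfl

noncomputable def hankelForm (v : Fin 13 → ℝ) (x : Fin 4 → ℝ) : ℝ :=
  ∑ i1 : Fin 4, ∑ i2 : Fin 4, ∑ i3 : Fin 4, ∑ i4 : Fin 4,
    v ⟨i1.1 + i2.1 + i3.1 + i4.1, by omega⟩ * x i1 * x i2 * x i3 * x i4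

set_option maxHeartbeats 1000000 in
theorem stmt6 (v : Fin 13 → ℝ) (h4 : v 4 = 0)
    (hpsd : ∀ x : Fin 4 → ℝ, 0 ≤ hankelForm v x) :
    (∀ j : Fin 13, 1 ≤ j.1 → j.1 ≤ 11 → v j = 0) ∧
    (∀ x : Fin 4 → ℝ, hankelForm v x = v 0 * (x 0) ^ 4 + v 12 * (x 3) ^ 4) ∧
    0 ≤ v 0 ∧ 0 ≤ v 12 := by
  have e0 : 0 ≤ v 0 := by
    have := hpsd ![1, 0, 0, 0]
    simpa [hankelForm, Fin.sum_univ_four, fin4_val3] using this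
  have e12 : 0 ≤ v 12 := by
    have := hpsd ![0, 0, 0, 1]
    simpa [hankelForm, Fin.sum_univ_four, fin4_val3] using this
  have e8 : 0 ≤ v 8 := by
    have := hpsd ![0, 0, 1, 0]
    simpa [hankelForm, Fin.sum_univ_four, fin4_val3] using this
  -- v 5 = 0
  have h5 : v 5 = 0 := by
    have key := z7 0 0 0 0 (v 8) (4*v 7) (6*v 6) (4*v 5) (fun t => by
      have h := hpsd ![0, t^2, t, 0]
      have e : hankelForm v ![0, t^2, t, 0]
          = 0 + 0*t + 0*t^2 + 0*t^3 + v 8*t^4 + (4*v 7)*t^5 + (6*v 6)*t^6 + (4*v 5)*t^7 := by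
        simp [hankelForm, Fin.sum_univ_four, fin4_val3, h4]; ring
      rw [e] at h; exact h)
    linarith
  -- v 6 = 0
  have h6 : v 6 = 0 := by
    have key1 := nn6 0 0 0 0 (v 8) (4*v 7) (6*v 6) (fun t => by
      have h := hpsd ![0, t^2, t, 0]
      have e : hankelForm v ![0, t^2, t, 0]
          = 0 + 0*t + 0*t^2 + 0*t^3 + v 8*t^4 + (4*v 7)*t^5 + (6*v 6)*t^6 := by
        simp [hankelForm, Fin.sum_univ_four, fin4_val3, h4, h5]; ring
      rw [e] at h; exact h)
    have key2 := nn6 (10000*v 12) (-4000*v 11) (-3400*v 10) (1160*v 9) (481*v 8)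
        (-116*v 7) (-34*v 6) (fun t => by
      have h := hpsd ![0, t^2, t, -10]
      have e : hankelForm v ![0, t^2, t, -10]
          = 10000*v 12 + (-4000*v 11)*t + (-3400*v 10)*t^2 + (1160*v 9)*t^3
            + (481*v 8)*t^4 + (-116*v 7)*t^5 + (-34*v 6)*t^6 := by
        simp [hankelForm, Fin.sum_univ_four, fin4_val3, h4, h5]; ring
      rw [e] at h; exact h)
    linarith
  -- v 7 = 0
  have h7 : v 7 = 0 := by
    have key := z5 0 0 0 0 (v 8) (4*v 7) (fun t => by
      have h := hpsd ![0, t^2, t, 0]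
      have e : hankelForm v ![0, t^2, t, 0]
          = 0 + 0*t + 0*t^2 + 0*t^3 + v 8*t^4 + (4*v 7)*t^5 := by
        simp [hankelForm, Fin.sum_univ_four, fin4_val3, h4, h5, h6]; ring
      rw [e] at h; exact h)
    linarith
  -- v 8 = 0
  have h8 : v 8 = 0 := by
    have key := nn4 (v 12) (4*v 11) (2*v 10) (-8*v 9) (-5*v 8) (fun t => by
      have h := hpsd ![0, -t^2, t, 1]
      have e : hankelForm v ![0, -t^2, t, 1]
          = v 12 + (4*v 11)*t + (2*v 10)*t^2 + (-8*v 9)*t^3 + (-5*v 8)*t^4 := by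
        simp [hankelForm, Fin.sum_univ_four, fin4_val3, h4, h5, h6, h7]; ring
      rw [e] at h; exact h)
    linarith
  -- v 9 = 0
  have h9 : v 9 = 0 := by
    have key := z3 (v 12) (4*v 11) (6*v 10) (4*v 9) (fun t => by
      have h := hpsd ![0, 0, t, 1]
      have e : hankelForm v ![0, 0, t, 1]
          = v 12 + (4*v 11)*t + (6*v 10)*t^2 + (4*v 9)*t^3 := by
        simp [hankelForm, Fin.sum_univ_four, fin4_val3, h4, h5, h6, h7, h8]; ring
      rw [e] at h; exact h)
    linarith
  -- v 10 = 0
  have h10 : v 10 = 0 := by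
    have key1 := nn2 (v 12) (4*v 11) (6*v 10) (fun t => by
      have h := hpsd ![0, 0, t, 1]
      have e : hankelForm v ![0, 0, t, 1]
          = v 12 + (4*v 11)*t + (6*v 10)*t^2 := by
        simp [hankelForm, Fin.sum_univ_four, fin4_val3, h4, h5, h6, h7, h8, h9]; ring
      rw [e] at h; exact h)
    have key2 := nn2 (v 12) (4*v 11) (-34*v 10) (fun t => by
      have h := hpsd ![0, -10*t^2, t, 1]
      have e : hankelForm v ![0, -10*t^2, t, 1]
          = v 12 + (4*v 11)*t + (-34*v 10)*t^2 := by
        simp [hankelForm, Fin.sum_univ_four, fin4_val3, h4, h5, h6, h7, h8, h9]; ring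
      rw [e] at h; exact h)
    linarith
  -- v 11 = 0
  have h11 : v 11 = 0 := by
    have key := z1 (v 12) (4*v 11) (fun t => by
      have h := hpsd ![0, 0, t, 1]
      have e : hankelForm v ![0, 0, t, 1] = v 12 + (4*v 11)*t := by
        simp [hankelForm, Fin.sum_univ_four, fin4_val3, h4, h5, h6, h7, h8, h9, h10]; ring
      rw [e] at h; exact h)
    linarith
  -- v 3 = 0
  have h3 : v 3 = 0 := by
    have key := z3 (v 0) (4*v 1) (10*v 2) (16*v 3) (fun t => by
      have h := hpsd ![1, t, t^2, 0]
      have e : hankelForm v ![1, t, t^2, 0]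
          = v 0 + (4*v 1)*t + (10*v 2)*t^2 + (16*v 3)*t^3 := by
        simp [hankelForm, Fin.sum_univ_four, fin4_val3, h4, h5, h6, h7, h8]; ring
      rw [e] at h; exact h)
    linarith
  -- v 2 = 0
  have h2 : v 2 = 0 := by
    have key1 := nn2 (v 0) (4*v 1) (10*v 2) (fun t => by
      have h := hpsd ![1, t, t^2, 0]
      have e : hankelForm v ![1, t, t^2, 0] = v 0 + (4*v 1)*t + (10*v 2)*t^2 := by
        simp [hankelForm, Fin.sum_univ_four, fin4_val3, h3, h4, h5, h6, h7, h8]; ring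
      rw [e] at h; exact h)
    have key2 := nn2 (v 0) (4*v 1) (-34*v 2) (fun t => by
      have h := hpsd ![1, t, -10*t^2, 0]
      have e : hankelForm v ![1, t, -10*t^2, 0] = v 0 + (4*v 1)*t + (-34*v 2)*t^2 := by
        simp [hankelForm, Fin.sum_univ_four, fin4_val3, h3, h4, h5, h6, h7, h8]; ring
      rw [e] at h; exact h)
    linarith
  -- v 1 = 0
  have h1 : v 1 = 0 := by
    have key := z1 (v 0) (4*v 1) (fun t => by
      have h := hpsd ![1, t, 0, 0]
      have e : hankelForm v ![1, t, 0, 0] = v 0 + (4*v 1)*t := by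
        simp [hankelForm, Fin.sum_univ_four, fin4_val3, h2, h3, h4]; ring
      rw [e] at h; exact h)
    linarith
  refine ⟨?_, ?_, e0, e12⟩
  · intro j hj1 hj2
    fin_cases j <;> simp_all
  · intro x
    simp [hankelForm, Fin.sum_univ_four, fin4_val3, h1, h2, h3, h4, h5, h6, h7, h8, h9, h10, h11]
    ring
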